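/- arXiv:2003.00677 — 8 statements merged into one kernel-verified Lean document; each statement's English description precedes it below -/
import Mathlib

section
/- For any point x in R^d modulo R·1, the tropical distance from x to the tropical hyperplane H_0 defined by the zero normal vector equals the difference between the largest and the second largest coordinate of x. -/
/-- The tropical distance on `ℝ^d` (descending to `ℝ^d / ℝ·1`). -/
noncomputable def dtr {d : ℕ} (v w : Fin d → ℝ) : ℝ :=
  (⨆ i, (v i - w i)) - ⨅ i, (v i - w i)

/-- `y` lies on the tropical hyperplane with normal vector `ω`:
the maximum of `ω i + y i` is attained at least twice. -/
def onTropHyp {d : ℕ} (ω y : Fin d → ℝ) : Prop :=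
  ∃ i j : Fin d, i ≠ j ∧ (∀ k, ω k + y k ≤ ω i + y i) ∧ ω i + y i = ω j + y j

/-!
On `H_0` the maximum of `y` is attained twice, hence at some index `c ≠ a` for any given `a`;
comparing the coordinates `a` and `c` of `x - y` gives `d_tr(x, y) ≥ x_a - max_{j ≠ a} x_j` for
every `a`. Conversely, lowering the largest coordinate of `x` to the second largest one moves
`x` onto `H_0` at exactly that distance.
-/

open Function

section TropicalHyperplane

variable {d : ℕ}

theorem sub_sub_sub_le_dtr (v w : Fin d → ℝ) (i j : Fin d) :
    (v i - w i) - (v j - w j) ≤ dtr v w :=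
  sub_le_sub (le_ciSup (f := fun k => v k - w k) (Finite.bddAbove_range _) i)
    (ciInf_le (f := fun k => v k - w k) (Finite.bddBelow_range _) j)

theorem dtr_update_self [Nontrivial (Fin d)] (x : Fin d → ℝ) (a : Fin d) (t : ℝ) :
    dtr x (update x a t) = |x a - t| := by
  obtain ⟨b, hb⟩ := exists_ne a
  have hdiff : ∀ k, x k - update x a t k = if k = a then x a - t else 0 := by
    intro k
    by_cases hk : k = a
    · subst hk; simp
    · simp [hk]
  have hsup : (⨆ k, (x k - update x a t k)) = max (x a - t) 0 := by
    refine le_antisymm (ciSup_le fun k => ?_) (max_le ?_ ?_)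
    · rw [hdiff]; split_ifs <;> simp
    · simpa [hdiff] using le_ciSup (Finite.bddAbove_range fun k => x k - update x a t k) a
    · simpa [hdiff, hb] using le_ciSup (Finite.bddAbove_range fun k => x k - update x a t k) b
  have hinf : (⨅ k, (x k - update x a t k)) = min (x a - t) 0 := by
    refine le_antisymm (le_min ?_ ?_) (le_ciInf fun k => ?_)
    · simpa [hdiff] using ciInf_le (Finite.bddBelow_range fun k => x k - update x a t k) a
    · simpa [hdiff, hb] using ciInf_le (Finite.bddBelow_range fun k => x k - update x a t k) b
    · rw [hdiff]; split_ifs <;> simp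
  rw [dtr, hsup, hinf, max_sub_min_eq_abs', sub_zero]

theorem onTropHyp_zero_update {x : Fin d → ℝ} {a b : Fin d} (hba : b ≠ a)
    (hb : ∀ k, k ≠ a → x k ≤ x b) : onTropHyp (fun _ => 0) (update x a (x b)) := by
  refine ⟨a, b, hba.symm, fun k => ?_, by simp [hba]⟩
  by_cases hk : k = a
  · simp [hk]
  · simpa [hk] using hb k hk

theorem exists_ne_forall_le_of_onTropHyp_zero {y : Fin d → ℝ} (hy : onTropHyp (fun _ => 0) y)
    (a : Fin d) : ∃ c, c ≠ a ∧ ∀ k, y k ≤ y c := by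
  obtain ⟨i, j, hij, hmax, heq⟩ := hy
  simp only [zero_add] at hmax heq
  by_cases hia : i = a
  · exact ⟨j, hia ▸ hij.symm, fun k => heq ▸ hmax k⟩
  · exact ⟨i, hia, hmax⟩

theorem sub_iSup_ne_le_dtr (x : Fin d → ℝ) {y : Fin d → ℝ} (hy : onTropHyp (fun _ => 0) y)
    (a : Fin d) : x a - ⨆ j : {j : Fin d // j ≠ a}, x j ≤ dtr x y := by
  obtain ⟨c, hca, hc⟩ := exists_ne_forall_le_of_onTropHyp_zero hy a
  have hxc : x c ≤ ⨆ j : {j : Fin d // j ≠ a}, x j :=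
    le_ciSup (f := fun j : {j : Fin d // j ≠ a} => x j) (Finite.bddAbove_range _) ⟨c, hca⟩
  linarith [sub_sub_sub_le_dtr x y a c, hc a]

end TropicalHyperplane

/-- the tropical distance from `x` to the tropical hyperplane `H_0`
(defined by the zero normal vector) equals the largest coordinate of `x` minus the
second largest coordinate of `x`. -/
theorem trop_dist_to_zero_hyperplane {d : ℕ} (hd : 2 ≤ d) (x : Fin d → ℝ) :
    sInf {r : ℝ | ∃ y : Fin d → ℝ, onTropHyp (fun _ => 0) y ∧ r = dtr x y}
      = ⨆ i : Fin d, (x i - ⨆ j : {j : Fin d // j ≠ i}, x j) := by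
  have : Nontrivial (Fin d) := Fin.nontrivial_iff_two_le.mpr hd
  have hlower : ∀ r ∈ {r : ℝ | ∃ y : Fin d → ℝ, onTropHyp (fun _ => 0) y ∧ r = dtr x y},
      (⨆ i : Fin d, (x i - ⨆ j : {j : Fin d // j ≠ i}, x j)) ≤ r := by
    rintro _ ⟨y, hy, rfl⟩
    exact ciSup_le (sub_iSup_ne_le_dtr x hy)
  obtain ⟨a, ha⟩ := Finite.exists_max x
  have : Nonempty {j : Fin d // j ≠ a} := let ⟨b, hb⟩ := exists_ne a; ⟨⟨b, hb⟩⟩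
  obtain ⟨b, hb⟩ := exists_eq_ciSup_of_finite (f := fun j : {j : Fin d // j ≠ a} => x j)
  have hbmax : ∀ k, k ≠ a → x k ≤ x b := fun k hk =>
    hb ▸ le_ciSup (f := fun j : {j : Fin d // j ≠ a} => x j) (Finite.bddAbove_range _) ⟨k, hk⟩
  have hy : onTropHyp (fun _ => 0) (update x a (x b)) := onTropHyp_zero_update b.2 hbmax
  have hdist : dtr x (update x a (x b)) ≤ ⨆ i : Fin d, (x i - ⨆ j : {j : Fin d // j ≠ i}, x j) := by
    rw [dtr_update_self, abs_of_nonneg (sub_nonneg.mpr (ha b)), hb]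
    exact le_ciSup (f := fun i : Fin d => x i - ⨆ j : {j : Fin d // j ≠ i}, x j)
      (Finite.bddAbove_range _) a
  exact le_antisymm ((csInf_le ⟨_, hlower⟩ ⟨_, hy, rfl⟩).trans hdist)
    (le_csInf ⟨_, _, hy, rfl⟩ hlower)
end

section
/- Under the assumptions of the hard margin case with pairwise distinct indices i_P, j_P, i_Q, j_Q and feasibility condition max{-F, -A-E} ≤ min{D+B, C}, the optimal value of the linear program maximizing z subject to z ≤ (p_{i_P} - p_{j_P}) + (ω_{i_P} - ω_{j_P}) for all p ∈ P, z ≤ (q_{i_Q} - q_{j_Q}) + (ω_{i_Q} - ω_{j_Q}) for all q ∈ Q, together with the sector constraints ω_{j_P} - ω_{i_P} ≤ p_{i_P} - p_{j_P}, ω_l - ω_{j_P} ≤ p_{j_P} - p_l (l ≠ i_P, j_P), ω_{j_Q} - ω_{i_Q} ≤ q_{i_Q} - q_{j_Q}, ω_l - ω_{j_Q} ≤ q_{j_Q} - q_l (l ≠ i_Q, j_Q), equals min{ A+C+E, D+B+F, (A+B+D+E)/2 }. -/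
/-- Theorem 4.1, optimal value part: when feasible, the optimal value
of the hard margin tropical SVM linear program with pairwise distinct indices
equals `min{A+C+E, D+B+F, (A+B+D+E)/2}`. -/
theorem hard_margin_case1_optimal_value {d : ℕ}
    (P Q : Finset (Fin d → ℝ)) (hP : P.Nonempty) (hQ : Q.Nonempty)
    (iP jP iQ jQ : Fin d)
    (h1 : iP ≠ jP) (h2 : iP ≠ iQ) (h3 : iP ≠ jQ)
    (h4 : jP ≠ iQ) (h5 : jP ≠ jQ) (h6 : iQ ≠ jQ)
    (A B C D E F : ℝ)
    (hA : A = P.inf' hP fun p => p iP - p jP)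
    (hB : B = P.inf' hP fun p => p jP - p iQ)
    (hC : C = P.inf' hP fun p => p jP - p jQ)
    (hD : D = Q.inf' hQ fun q => q iQ - q jQ)
    (hE : E = Q.inf' hQ fun q => q jQ - q iP)
    (hF : F = Q.inf' hQ fun q => q jQ - q jP)
    (hfeas : max (-F) (-A - E) ≤ min (D + B) C) :
    IsGreatest
      {z : ℝ | ∃ ω : Fin d → ℝ,
        (∀ p ∈ P, z ≤ (p iP - p jP) + (ω iP - ω jP) ∧
          ω jP - ω iP ≤ p iP - p jP ∧
          ∀ l : Fin d, l ≠ iP → l ≠ jP → ω l - ω jP ≤ p jP - p l) ∧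
        (∀ q ∈ Q, z ≤ (q iQ - q jQ) + (ω iQ - ω jQ) ∧
          ω jQ - ω iQ ≤ q iQ - q jQ ∧
          ∀ l : Fin d, l ≠ iQ → l ≠ jQ → ω l - ω jQ ≤ q jQ - q l)}
      (min (min (A + C + E) (D + B + F)) ((A + B + D + E) / 2)) := by
  classical
  set M := min (min (A + C + E) (D + B + F)) ((A + B + D + E) / 2) with hMdef
  have hfF : -F ≤ D + B := le_trans (le_trans (le_max_left _ _) hfeas) (min_le_left _ _)
  have hfFC : -F ≤ C := le_trans (le_trans (le_max_left _ _) hfeas) (min_le_right _ _)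
  have hfAE : -A - E ≤ D + B := le_trans (le_trans (le_max_right _ _) hfeas) (min_le_left _ _)
  have hfAEC : -A - E ≤ C := le_trans (le_trans (le_max_right _ _) hfeas) (min_le_right _ _)
  have hM1 : M ≤ A + C + E := le_trans (min_le_left _ _) (min_le_left _ _)
  have hM2 : M ≤ D + B + F := le_trans (min_le_left _ _) (min_le_right _ _)
  have hM3 : M ≤ (A + B + D + E) / 2 := min_le_right _ _
  set x : ℝ := max (-A) (M - A) with hxdef
  set v : ℝ := max (max (-F) (-A - E)) (M - A - E) with hvdef
  have hxA : -A ≤ x := le_max_left _ _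
  have hxM : M - A ≤ x := le_max_right _ _
  have hvF : -F ≤ v := le_trans (le_max_left _ _) (le_max_left _ _)
  have hvAE : -A - E ≤ v := le_trans (le_max_right _ _) (le_max_left _ _)
  have hvMAE : M - A - E ≤ v := le_max_right _ _
  have hvC : v ≤ C := max_le (max_le hfFC hfAEC) (by linarith)
  have hvDB : v ≤ D + B := max_le (max_le hfF hfAE) (by linarith)
  have hvM : v ≤ D + B - M :=
    max_le (max_le (by linarith) (by linarith)) (by linarith)
  have hxvE : x ≤ v + E := max_le (by linarith) (by linarith)
  constructor
  · -- membership: construct the witness ω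
    set ω : Fin d → ℝ := fun l =>
      if l = iP then x else if l = jP then 0 else if l = iQ then B else if l = jQ then v
      else min (P.inf' hP fun p => p jP - p l) (v + Q.inf' hQ fun q => q jQ - q l) with hω
    have eiP : ω iP = x := by simp [hω]
    have ejP : ω jP = 0 := by simp [hω, h1.symm]
    have eiQ : ω iQ = B := by simp [hω, h2.symm, h4.symm]
    have ejQ : ω jQ = v := by simp [hω, h3.symm, h5.symm, h6.symm]
    refine ⟨ω, ?_, ?_⟩
    · intro p hp
      have hAp : A ≤ p iP - p jP := hA ▸ Finset.inf'_le _ hp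
      have hBp : B ≤ p jP - p iQ := hB ▸ Finset.inf'_le _ hp
      have hCp : C ≤ p jP - p jQ := hC ▸ Finset.inf'_le _ hp
      refine ⟨by rw [eiP, ejP]; linarith, by rw [eiP, ejP]; linarith, ?_⟩
      intro l hl1 hl2
      rw [ejP]
      by_cases hq1 : l = iQ
      · subst hq1; rw [eiQ]; linarith
      by_cases hq2 : l = jQ
      · subst hq2; rw [ejQ]; linarith
      have el : ω l = min (P.inf' hP fun p => p jP - p l)
          (v + Q.inf' hQ fun q => q jQ - q l) := by
        simp [hω, hl1, hl2, hq1, hq2]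
      have : ω l ≤ P.inf' hP fun p => p jP - p l := el ▸ min_le_left _ _
      have hle : (P.inf' hP fun p => p jP - p l) ≤ p jP - p l := Finset.inf'_le _ hp
      linarith
    · intro q hq
      have hDq : D ≤ q iQ - q jQ := hD ▸ Finset.inf'_le _ hq
      have hEq : E ≤ q jQ - q iP := hE ▸ Finset.inf'_le _ hq
      have hFq : F ≤ q jQ - q jP := hF ▸ Finset.inf'_le _ hq
      refine ⟨by rw [eiQ, ejQ]; linarith, by rw [eiQ, ejQ]; linarith, ?_⟩
      intro l hl1 hl2
      rw [ejQ]
      by_cases hp1 : l = iP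
      · subst hp1; rw [eiP]; linarith
      by_cases hp2 : l = jP
      · subst hp2; rw [ejP]; linarith
      have el : ω l = min (P.inf' hP fun p => p jP - p l)
          (v + Q.inf' hQ fun q => q jQ - q l) := by
        simp [hω, hp1, hp2, hl1, hl2]
      have : ω l ≤ v + Q.inf' hQ fun q => q jQ - q l := el ▸ min_le_right _ _
      have hle : (Q.inf' hQ fun q => q jQ - q l) ≤ q jQ - q l := Finset.inf'_le _ hq
      linarith
  · -- upper bound
    rintro z ⟨ω, hPc, hQc⟩
    obtain ⟨pA, hpA, epA⟩ := Finset.exists_mem_eq_inf' hP (fun p => p iP - p jP)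
    obtain ⟨pB, hpB, epB⟩ := Finset.exists_mem_eq_inf' hP (fun p => p jP - p iQ)
    obtain ⟨pC, hpC, epC⟩ := Finset.exists_mem_eq_inf' hP (fun p => p jP - p jQ)
    obtain ⟨qD, hqD, eqD⟩ := Finset.exists_mem_eq_inf' hQ (fun q => q iQ - q jQ)
    obtain ⟨qE, hqE, eqE⟩ := Finset.exists_mem_eq_inf' hQ (fun q => q jQ - q iP)
    obtain ⟨qF, hqF, eqF⟩ := Finset.exists_mem_eq_inf' hQ (fun q => q jQ - q jP)
    have eA : A = pA iP - pA jP := hA.trans epA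
    have eB : B = pB jP - pB iQ := hB.trans epB
    have eC : C = pC jP - pC jQ := hC.trans epC
    have eD : D = qD iQ - qD jQ := hD.trans eqD
    have eE : E = qE jQ - qE iP := hE.trans eqE
    have eF : F = qF jQ - qF jP := hF.trans eqF
    have hzP : z ≤ (pA iP - pA jP) + (ω iP - ω jP) := (hPc pA hpA).1
    have hzQ : z ≤ (qD iQ - qD jQ) + (ω iQ - ω jQ) := (hQc qD hqD).1
    have hBc : ω iQ - ω jP ≤ pB jP - pB iQ := (hPc pB hpB).2.2 iQ h2.symm h4.symm
    have hCc : ω jQ - ω jP ≤ pC jP - pC jQ := (hPc pC hpC).2.2 jQ h3.symm h5.symm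
    have hEc : ω iP - ω jQ ≤ qE jQ - qE iP := (hQc qE hqE).2.2 iP h2 h3
    have hFc : ω jP - ω jQ ≤ qF jQ - qF jP := (hQc qF hqF).2.2 jP h4 h5
    rw [hMdef]
    refine le_min (le_min ?_ ?_) ?_ <;> linarith
end

section
/- Let P, Q be finite sets in R^d/R·1 with constant indices i_P, j_P for P and i_Q, j_Q for Q, where i_P = j_Q and i_Q ≠ j_P (and i_P ≠ j_P, i_Q ≠ j_Q, i_P ≠ i_Q). Set A = min_{ξ∈P∪Q}(ξ_{i_P} - ξ_{j_P}), B = min_{p∈P}(p_{j_P} - p_{i_Q}), C = min_{q∈Q}(q_{i_Q} - q_{i_P}). Then the hard margin tropical SVM linear program (with constraints ω_{j_P} - ω_{i_P} ≤ p_{i_P} - p_{j_P}, ω_l - ω_{j_P} ≤ p_{j_P} - p_l for l ≠ i_P, j_P, and ω_{j_Q} - ω_{i_Q} ≤ q_{i_Q} - q_{j_Q}, ω_l - ω_{j_Q} ≤ q_{j_Q} - q_l for l ≠ i_Q, j_Q) is feasible if and only if A + B + C ≥ 0; and when feasible, its optimal margin equals min{ A+B+C, (A'+B+C)/2 } where A'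 = min_{p∈P}(p_{i_P} - p_{j_P}). -/
/-- Theorem 4.2(i): case `iP = jQ`, `iQ ≠ jP`. Feasibility of the hard
margin tropical SVM linear program is equivalent to `A + B + C ≥ 0`, and when
feasible the optimal margin equals `min{A+B+C, (A'+B+C)/2}`. Here `jQ` is
identified with `iP` throughout. -/
theorem hard_margin_case2_feasible_and_optimal {d : ℕ}
    (P Q : Finset (Fin d → ℝ)) (hP : P.Nonempty) (hQ : Q.Nonempty)
    (iP jP iQ : Fin d)
    (h1 : iP ≠ jP) (h2 : iQ ≠ iP) (h3 : iQ ≠ jP)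
    (A A' B C : ℝ)
    (hA : A = (P ∪ Q).inf' (hP.mono Finset.subset_union_left) fun ξ => ξ iP - ξ jP)
    (hA' : A' = P.inf' hP fun p => p iP - p jP)
    (hB : B = P.inf' hP fun p => p jP - p iQ)
    (hC : C = Q.inf' hQ fun q => q iQ - q iP) :
    ((∃ (z : ℝ) (ω : Fin d → ℝ),
      (∀ p ∈ P, z + p jP + ω jP - p iP - ω iP ≤ 0 ∧
        ω jP - ω iP ≤ p iP - p jP ∧
        ∀ l : Fin d, l ≠ iP → l ≠ jP → ω l - ω jP ≤ p jP - p l) ∧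
      (∀ q ∈ Q, z + q iP + ω iP - q iQ - ω iQ ≤ 0 ∧
        ω iP - ω iQ ≤ q iQ - q iP ∧
        ∀ l : Fin d, l ≠ iQ → l ≠ iP → ω l - ω iP ≤ q iP - q l))
    ↔ 0 ≤ A + B + C) ∧
    (0 ≤ A + B + C →
      IsGreatest
        {z : ℝ | ∃ ω : Fin d → ℝ,
          (∀ p ∈ P, z + p jP + ω jP - p iP - ω iP ≤ 0 ∧
            ω jP - ω iP ≤ p iP - p jP ∧
            ∀ l : Fin d, l ≠ iP → l ≠ jP → ω l - ω jP ≤ p jP - p l) ∧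
          (∀ q ∈ Q, z + q iP + ω iP - q iQ - ω iQ ≤ 0 ∧
            ω iP - ω iQ ≤ q iQ - q iP ∧
            ∀ l : Fin d, l ≠ iQ → l ≠ iP → ω l - ω iP ≤ q iP - q l)}
        (min (A + B + C) ((A' + B + C) / 2))) := by
  have hAP : ∀ p ∈ P, A ≤ p iP - p jP := fun p hp => by
    rw [hA]; exact Finset.inf'_le _ (Finset.mem_union_left _ hp)
  have hAQ : ∀ q ∈ Q, A ≤ q iP - q jP := fun q hq => by
    rw [hA]; exact Finset.inf'_le _ (Finset.mem_union_right _ hq)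
  have hA'P : ∀ p ∈ P, A' ≤ p iP - p jP := fun p hp => by
    rw [hA']; exact Finset.inf'_le _ hp
  have hBP : ∀ p ∈ P, B ≤ p jP - p iQ := fun p hp => by
    rw [hB]; exact Finset.inf'_le _ hp
  have hCQ : ∀ q ∈ Q, C ≤ q iQ - q iP := fun q hq => by
    rw [hC]; exact Finset.inf'_le _ hq
  have hAA' : A ≤ A' := by
    rw [hA']; exact Finset.le_inf' _ _ fun p hp => hAP p hp
  set M := min (A + B + C) ((A' + B + C) / 2) with hM
  -- key lemma: any feasible (z, ω) gives 0 ≤ A+B+C and z ≤ M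
  have hkey : ∀ (z : ℝ) (ω : Fin d → ℝ),
      (∀ p ∈ P, z + p jP + ω jP - p iP - ω iP ≤ 0 ∧
        ω jP - ω iP ≤ p iP - p jP ∧
        ∀ l : Fin d, l ≠ iP → l ≠ jP → ω l - ω jP ≤ p jP - p l) →
      (∀ q ∈ Q, z + q iP + ω iP - q iQ - ω iQ ≤ 0 ∧
        ω iP - ω iQ ≤ q iQ - q iP ∧
        ∀ l : Fin d, l ≠ iQ → l ≠ iP → ω l - ω iP ≤ q iP - q l) →
      0 ≤ A + B + C ∧ z ≤ M := by
    intro z ω hPc hQc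
    have hu : ω jP - ω iP ≤ A := by
      rw [hA]
      refine Finset.le_inf' _ _ fun ξ hξ => ?_
      rcases Finset.mem_union.1 hξ with h | h
      · exact (hPc ξ h).2.1
      · exact (hQc ξ h).2.2 jP (Ne.symm h3) (Ne.symm h1)
    have huv : ω iQ - ω jP ≤ B := by
      rw [hB]; exact Finset.le_inf' _ _ fun p hp => (hPc p hp).2.2 iQ h2 h3
    have hv : ω iP - ω iQ ≤ C := by
      rw [hC]; exact Finset.le_inf' _ _ fun q hq => (hQc q hq).2.1
    have hz1 : z - (ω iP - ω jP) ≤ A' := by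
      rw [hA']
      exact Finset.le_inf' _ _ fun p hp => by have := (hPc p hp).1; linarith
    have hz2 : z - (ω iQ - ω iP) ≤ C := by
      rw [hC]
      exact Finset.le_inf' _ _ fun q hq => by have := (hQc q hq).1; linarith
    exact ⟨by linarith, le_min (by linarith) (by linarith)⟩
  -- membership: when 0 ≤ A+B+C, z = M is attained
  have hmem : 0 ≤ A + B + C → ∃ ω : Fin d → ℝ,
      (∀ p ∈ P, M + p jP + ω jP - p iP - ω iP ≤ 0 ∧
        ω jP - ω iP ≤ p iP - p jP ∧
        ∀ l : Fin d, l ≠ iP → l ≠ jP → ω l - ω jP ≤ p jP - p l) ∧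
      (∀ q ∈ Q, M + q iP + ω iP - q iQ - ω iQ ≤ 0 ∧
        ω iP - ω iQ ≤ q iQ - q iP ∧
        ∀ l : Fin d, l ≠ iQ → l ≠ iP → ω l - ω iP ≤ q iP - q l) := by
    intro h0
    set u := max ((B + C - A') / 2) (-A) with hu
    have hu1 : (B + C - A') / 2 ≤ u := le_max_left _ _
    have hu2 : -A ≤ u := le_max_right _ _
    have hu3 : u ≤ B + C := by
      apply max_le
      · linarith
      · linarith
    have hMu : M ≤ B + C - u := by
      rcases le_total ((B + C - A') / 2) (-A) with h | h
      · rw [hu, max_eq_right h]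
        have := min_le_left (A + B + C) ((A' + B + C) / 2)
        linarith
      · rw [hu, max_eq_left h]
        have := min_le_right (A + B + C) ((A' + B + C) / 2)
        linarith
    have hMA' : M ≤ A' + u := by
      have := min_le_right (A + B + C) ((A' + B + C) / 2)
      linarith
    set ω : Fin d → ℝ := fun l =>
      if l = jP then 0 else if l = iP then u else if l = iQ then B
      else min (P.inf' hP fun p => p jP - p l) (u + Q.inf' hQ fun q => q iP - q l)
      with hω
    have e1 : ω jP = 0 := by simp [hω]
    have e2 : ω iP = u := by simp [hω, h1]
    have e3 : ω iQ = B := by simp [hω, h2, h3]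
    have e4 : ∀ l, l ≠ jP → l ≠ iP → l ≠ iQ →
        ω l = min (P.inf' hP fun p => p jP - p l) (u + Q.inf' hQ fun q => q iP - q l) := by
      intro l hl1 hl2 hl3; simp [hω, hl1, hl2, hl3]
    refine ⟨ω, fun p hp => ⟨?_, ?_, ?_⟩, fun q hq => ⟨?_, ?_, ?_⟩⟩
    · rw [e1, e2]; have := hA'P p hp; linarith
    · rw [e1, e2]; have := hA'P p hp; linarith
    · intro l hl2 hl1
      by_cases hl3 : l = iQ
      · subst hl3; rw [e3, e1]; have := hBP p hp; linarith
      · rw [e4 l hl1 hl2 hl3, e1]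
        have h5 : P.inf' hP (fun p => p jP - p l) ≤ p jP - p l := Finset.inf'_le _ hp
        have h6 := min_le_left (P.inf' hP fun p => p jP - p l)
          (u + Q.inf' hQ fun q => q iP - q l)
        linarith
    · rw [e2, e3]; have := hCQ q hq; linarith
    · rw [e2, e3]; have := hCQ q hq; linarith
    · intro l hl1 hl2
      by_cases hl3 : l = jP
      · subst hl3; rw [e1, e2]; have := hAQ q hq; linarith
      · rw [e4 l hl3 hl2 hl1, e2]
        have h5 : Q.inf' hQ (fun q => q iP - q l) ≤ q iP - q l := Finset.inf'_le _ hq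
        have h6 := min_le_right (P.inf' hP fun p => p jP - p l)
          (u + Q.inf' hQ fun q => q iP - q l)
        linarith
  constructor
  · constructor
    · rintro ⟨z, ω, hPc, hQc⟩
      exact (hkey z ω hPc hQc).1
    · intro h
      obtain ⟨ω, hω1, hω2⟩ := hmem h
      exact ⟨M, ω, hω1, hω2⟩
  · intro h
    refine ⟨?_, ?_⟩
    · obtain ⟨ω, hω1, hω2⟩ := hmem h
      exact ⟨ω, hω1, hω2⟩
    · rintro z ⟨ω, hPc, hQc⟩
      exact (hkey z ω hPc hQc).2
end

section
/- Let P, Q be finite sets in R^d/R·1 and k_1 ≠ k_2 indices with i(p) = k_1, j(p) = k_2 for all p ∈ P and i(q) = k_2, j(q) = k_1 for all q ∈ Q. Then the hard margin tropical SVM linear program is feasible if and only if max_{p∈P}(p_{k_2} - p_{k_1}) ≤ min_{q∈Q}(q_{k_2} - q_{k_1}); and when feasible, the optimal margin equals (1/2)( min_{p∈P}(p_{k_1} - p_{k_2}) + min_{q∈Q}(q_{k_2} - q_{k_1}) ). -/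
/-!
Put `δ = ω k₂ - ω k₁`. The constraints involving `z` or `δ` say `z + δ ≤ p k₁ - p k₂` and
`δ ≤ p k₁ - p k₂` on `P`, `z - δ ≤ q k₂ - q k₁` and `-δ ≤ q k₂ - q k₁` on `Q`; every other
coordinate of `ω` is only bounded from above, so it can be taken as small as needed. Hence `z` is
attained iff `max z 0 + δ ≤ A` and `max z 0 - δ ≤ B` for some `δ`, where `A` and `B` are the two
minima of the theorem, that is iff `2 * max z 0 ≤ A + B`. Both feasibility (some `z` works iff
`0 ≤ A + B`) and the optimal margin `(A + B) / 2` can be read off from this.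
-/

theorem Finset.exists_le_forall_mem_and_forall_mem {α β : Type*} (s : Finset α) (t : Finset β)
    (f : α → ℝ) (g : β → ℝ) : ∃ c, (∀ a ∈ s, c ≤ f a) ∧ ∀ b ∈ t, c ≤ g b := by
  classical
  obtain ⟨c, hc⟩ := (s.image f ∪ t.image g).bddBelow
  refine ⟨c, fun a ha => hc ?_, fun b hb => hc ?_⟩ <;>
    simp only [Finset.coe_union, Finset.coe_image, Set.mem_union, Set.mem_image,
      Finset.mem_coe] <;> grind

theorem Finset.sup'_sub_eq_neg_inf'_sub {α : Type*} {s : Finset α} (hs : s.Nonempty)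
    (f g : α → ℝ) : (s.sup' hs fun a => g a - f a) = -s.inf' hs fun a => f a - g a := by
  refine le_antisymm (Finset.sup'_le _ _ fun a ha => ?_) ?_
  · linarith [Finset.inf'_le (fun a => f a - g a) ha]
  · obtain ⟨a, ha, h⟩ := Finset.exists_mem_eq_inf' hs fun a => f a - g a
    linarith [Finset.le_sup' (fun a => g a - f a) ha]

namespace HardMarginSVM

variable {ι : Type*} (P Q : Finset (ι → ℝ)) (k₁ k₂ : ι)

def Feasible (z : ℝ) (ω : ι → ℝ) : Prop :=
  (∀ p ∈ P, z + p k₂ + ω k₂ - p k₁ - ω k₁ ≤ 0 ∧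
    ω k₂ - ω k₁ ≤ p k₁ - p k₂ ∧
    ∀ l : ι, l ≠ k₁ → l ≠ k₂ → ω l - ω k₂ ≤ p k₂ - p l) ∧
  (∀ q ∈ Q, z + q k₁ + ω k₁ - q k₂ - ω k₂ ≤ 0 ∧
    ω k₁ - ω k₂ ≤ q k₂ - q k₁ ∧
    ∀ l : ι, l ≠ k₁ → l ≠ k₂ → ω l - ω k₁ ≤ q k₁ - q l)

variable {P Q k₁ k₂}

theorem exists_feasible_iff (hk : k₁ ≠ k₂) {z : ℝ} :
    (∃ ω, Feasible P Q k₁ k₂ z ω) ↔ ∃ δ : ℝ,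
      (∀ p ∈ P, max z 0 + δ ≤ p k₁ - p k₂) ∧ ∀ q ∈ Q, max z 0 - δ ≤ q k₂ - q k₁ := by
  classical
  constructor
  · rintro ⟨ω, hωP, hωQ⟩
    refine ⟨ω k₂ - ω k₁, fun p hp => ?_, fun q hq => ?_⟩
    · obtain ⟨h₁, h₂, -⟩ := hωP p hp
      have := max_le (show z ≤ p k₁ - p k₂ - (ω k₂ - ω k₁) by linarith) (sub_nonneg.2 h₂)
      linarith
    · obtain ⟨h₁, h₂, -⟩ := hωQ q hq
      have := max_le (show z ≤ q k₂ - q k₁ + (ω k₂ - ω k₁) by linarith)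
        (show 0 ≤ q k₂ - q k₁ + (ω k₂ - ω k₁) by linarith)
      linarith
  · rintro ⟨δ, hδP, hδQ⟩
    choose c hcP hcQ using fun l => Finset.exists_le_forall_mem_and_forall_mem P Q
      (fun p => δ + p k₂ - p l) (fun q => q k₁ - q l)
    set ω := Function.update (Function.update c k₁ 0) k₂ δ
    have hω₁ : ω k₁ = 0 := by simp [ω, hk]
    have hω₂ : ω k₂ = δ := by simp [ω]
    have hω : ∀ l, l ≠ k₁ → l ≠ k₂ → ω l = c l := fun l h₁ h₂ => by simp [ω, h₁, h₂]
    have hz := le_max_left z 0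
    have h0 := le_max_right z 0
    refine ⟨ω, fun p hp => ?_, fun q hq => ?_⟩
    · have := hδP p hp
      refine ⟨by linarith, by linarith, fun l h₁ h₂ => ?_⟩
      linarith [hω l h₁ h₂, hcP l p hp]
    · have := hδQ q hq
      refine ⟨by linarith, by linarith, fun l h₁ h₂ => ?_⟩
      linarith [hω l h₁ h₂, hcQ l q hq]

theorem exists_feasible_iff_two_mul_max_le (hk : k₁ ≠ k₂) (hP : P.Nonempty) (hQ : Q.Nonempty)
    {z : ℝ} : (∃ ω, Feasible P Q k₁ k₂ z ω) ↔
      2 * max z 0 ≤ (P.inf' hP fun p => p k₁ - p k₂) + Q.inf' hQ fun q => q k₂ - q k₁ := by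
  simp_rw [exists_feasible_iff hk, ← Finset.le_inf'_iff hP, ← Finset.le_inf'_iff hQ]
  constructor
  · rintro ⟨δ, hA, hB⟩
    linarith
  · intro h
    refine ⟨((P.inf' hP fun p => p k₁ - p k₂) - Q.inf' hQ fun q => q k₂ - q k₁) / 2, ?_, ?_⟩ <;>
      linarith

end HardMarginSVM

/-- Theorem 4.3: case `i(p)=k₁, j(p)=k₂` on `P` and `i(q)=k₂, j(q)=k₁`
on `Q`. The hard margin tropical SVM linear program is feasible iff
`max_{p∈P}(p_{k₂} - p_{k₁}) ≤ min_{q∈Q}(q_{k₂} - q_{k₁})`, and when feasible the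
optimal margin equals `(min_{p∈P}(p_{k₁}-p_{k₂}) + min_{q∈Q}(q_{k₂}-q_{k₁}))/2`. -/
theorem hard_margin_case3_feasible_and_optimal {d : ℕ}
    (P Q : Finset (Fin d → ℝ)) (hP : P.Nonempty) (hQ : Q.Nonempty)
    (k₁ k₂ : Fin d) (hk : k₁ ≠ k₂) :
    ((∃ (z : ℝ) (ω : Fin d → ℝ),
      (∀ p ∈ P, z + p k₂ + ω k₂ - p k₁ - ω k₁ ≤ 0 ∧
        ω k₂ - ω k₁ ≤ p k₁ - p k₂ ∧
        ∀ l : Fin d, l ≠ k₁ → l ≠ k₂ → ω l - ω k₂ ≤ p k₂ - p l) ∧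
      (∀ q ∈ Q, z + q k₁ + ω k₁ - q k₂ - ω k₂ ≤ 0 ∧
        ω k₁ - ω k₂ ≤ q k₂ - q k₁ ∧
        ∀ l : Fin d, l ≠ k₁ → l ≠ k₂ → ω l - ω k₁ ≤ q k₁ - q l))
    ↔ (P.sup' hP fun p => p k₂ - p k₁) ≤ Q.inf' hQ fun q => q k₂ - q k₁) ∧
    ((P.sup' hP fun p => p k₂ - p k₁) ≤ (Q.inf' hQ fun q => q k₂ - q k₁) →
      IsGreatest
        {z : ℝ | ∃ ω : Fin d → ℝ,
          (∀ p ∈ P, z + p k₂ + ω k₂ - p k₁ - ω k₁ ≤ 0 ∧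
            ω k₂ - ω k₁ ≤ p k₁ - p k₂ ∧
            ∀ l : Fin d, l ≠ k₁ → l ≠ k₂ → ω l - ω k₂ ≤ p k₂ - p l) ∧
          (∀ q ∈ Q, z + q k₁ + ω k₁ - q k₂ - ω k₂ ≤ 0 ∧
            ω k₁ - ω k₂ ≤ q k₂ - q k₁ ∧
            ∀ l : Fin d, l ≠ k₁ → l ≠ k₂ → ω l - ω k₁ ≤ q k₁ - q l)}
        (((P.inf' hP fun p => p k₁ - p k₂) + (Q.inf' hQ fun q => q k₂ - q k₁)) / 2)) := by
  rw [Finset.sup'_sub_eq_neg_inf'_sub hP (fun p => p k₁) (fun p => p k₂),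
    neg_le_iff_add_nonneg']
  have key z := HardMarginSVM.exists_feasible_iff_two_mul_max_le (z := z) hk hP hQ
  refine ⟨⟨fun ⟨z, ω, hω⟩ => ?_, fun h => ⟨0, (key 0).2 (by simpa using h)⟩⟩,
    fun h => ⟨(key _).2 ?_, fun z hz => ?_⟩⟩
  · linarith [(key z).1 ⟨ω, hω⟩, le_max_right z 0]
  · rw [max_eq_left (by linarith)]
    linarith
  · linarith [(key z).1 hz, le_max_left z 0]
end

section
/- Let P, Q be finite sets in R^d/R·1 with constant indices i_P for P, i_Q for Q, and a common second index j = j_P = j_Q (with i_P, i_Q, j pairwise distinct). Then the hard margin tropical SVM linear program is feasible if and only if max_{q∈Q}(q_{i_P} - q_j) ≤ min_{p∈P}(p_{i_P} - p_j) and max_{p∈P}(p_{i_Q} - p_j) ≤ min_{q∈Q}(q_{i_Q} - q_j); and when feasible, the optimal margin equals min{ min_{p∈P}(p_{i_P} - p_j) + min_{q∈Q}(q_j - q_{i_P}), min_{q∈Q}(q_{i_Q} - q_j) + min_{p∈P}(p_j - p_{i_Q}) }. -/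
private lemma aux_mem {d : ℕ} (P Q : Finset (Fin d → ℝ)) (hP : P.Nonempty) (hQ : Q.Nonempty)
    (iP iQ j : Fin d) (h1 : iP ≠ iQ) (h2 : iP ≠ j) (h3 : iQ ≠ j)
    (hc1 : (Q.sup' hQ fun q => q iP - q j) ≤ (P.inf' hP fun p => p iP - p j))
    (hc2 : (P.sup' hP fun p => p iQ - p j) ≤ (Q.inf' hQ fun q => q iQ - q j))
    (z : ℝ)
    (hz : z ≤ min ((P.inf' hP fun p => p iP - p j) + (Q.inf' hQ fun q => q j - q iP))
             ((Q.inf' hQ fun q => q iQ - q j) + (P.inf' hP fun p => p j - p iQ))) :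
    ∃ ω : Fin d → ℝ,
      (∀ p ∈ P, z + p j + ω j - p iP - ω iP ≤ 0 ∧
        ω j - ω iP ≤ p iP - p j ∧
        ∀ l : Fin d, l ≠ iP → l ≠ j → ω l - ω j ≤ p j - p l) ∧
      (∀ q ∈ Q, z + q j + ω j - q iQ - ω iQ ≤ 0 ∧
        ω j - ω iQ ≤ q iQ - q j ∧
        ∀ l : Fin d, l ≠ iQ → l ≠ j → ω l - ω j ≤ q j - q l) := by
  classical
  set a := P.inf' hP fun p => p iP - p j with ha
  set b := Q.inf' hQ fun q => q j - q iP with hb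
  set c := Q.inf' hQ fun q => q iQ - q j with hc
  set e := P.inf' hP fun p => p j - p iQ with he
  set ω : Fin d → ℝ := fun l => if l = j then 0 else if l = iP then b else if l = iQ then e
    else min (P.inf' hP fun p => p j - p l) (Q.inf' hQ fun q => q j - q l) with hω
  have hωj : ω j = 0 := by simp [hω]
  have hωiP : ω iP = b := by simp [hω, h2]
  have hωiQ : ω iQ = e := by simp [hω, h3, h1.symm]
  refine ⟨ω, ?_, ?_⟩
  · intro p hp
    have hain : a ≤ p iP - p j := Finset.inf'_le _ hp
    refine ⟨?_, ?_, ?_⟩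
    · rw [hωj, hωiP]
      have := min_le_left ((a:ℝ) + b) (c + e)
      linarith
    · rw [hωj, hωiP]
      have hble : p j - p iP ≤ b := by
        apply Finset.le_inf'
        intro q hq
        have := Finset.le_sup' (fun q => q iP - q j) hq
        linarith
      linarith
    · intro l hlP hlj
      rw [hωj]
      by_cases hlQ : l = iQ
      · rw [hlQ, hωiQ]
        have : e ≤ p j - p iQ := Finset.inf'_le _ hp
        linarith
      · have hωl : ω l = min (P.inf' hP fun p => p j - p l) (Q.inf' hQ fun q => q j - q l) := by
          simp [hω, hlP, hlj, hlQ]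
        rw [hωl]
        have h4 : (P.inf' hP fun p => p j - p l) ≤ p j - p l := Finset.inf'_le _ hp
        have h5 := min_le_left (P.inf' hP fun p => p j - p l) (Q.inf' hQ fun q => q j - q l)
        linarith
  · intro q hq
    have hcin : c ≤ q iQ - q j := Finset.inf'_le _ hq
    refine ⟨?_, ?_, ?_⟩
    · rw [hωj, hωiQ]
      have := min_le_right ((a:ℝ) + b) (c + e)
      linarith
    · rw [hωj, hωiQ]
      have hele : q j - q iQ ≤ e := by
        apply Finset.le_inf'
        intro p hp
        have := Finset.le_sup' (fun p => p iQ - p j) hp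
        linarith
      linarith
    · intro l hlQ hlj
      rw [hωj]
      by_cases hlP : l = iP
      · rw [hlP, hωiP]
        have : b ≤ q j - q iP := Finset.inf'_le _ hq
        linarith
      · have hωl : ω l = min (P.inf' hP fun p => p j - p l) (Q.inf' hQ fun q => q j - q l) := by
          simp [hω, hlP, hlj, hlQ]
        rw [hωl]
        have h4 : (Q.inf' hQ fun q => q j - q l) ≤ q j - q l := Finset.inf'_le _ hq
        have h5 := min_le_right (P.inf' hP fun p => p j - p l) (Q.inf' hQ fun q => q j - q l)
        linarith

private lemma aux_ub {d : ℕ} (P Q : Finset (Fin d → ℝ)) (hP : P.Nonempty) (hQ : Q.Nonempty)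
    (iP iQ j : Fin d) (h1 : iP ≠ iQ) (h2 : iP ≠ j) (h3 : iQ ≠ j)
    (z : ℝ) (ω : Fin d → ℝ)
    (hPc : ∀ p ∈ P, z + p j + ω j - p iP - ω iP ≤ 0 ∧
        ω j - ω iP ≤ p iP - p j ∧
        ∀ l : Fin d, l ≠ iP → l ≠ j → ω l - ω j ≤ p j - p l)
    (hQc : ∀ q ∈ Q, z + q j + ω j - q iQ - ω iQ ≤ 0 ∧
        ω j - ω iQ ≤ q iQ - q j ∧
        ∀ l : Fin d, l ≠ iQ → l ≠ j → ω l - ω j ≤ q j - q l) :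
    z ≤ min ((P.inf' hP fun p => p iP - p j) + (Q.inf' hQ fun q => q j - q iP))
             ((Q.inf' hQ fun q => q iQ - q j) + (P.inf' hP fun p => p j - p iQ)) := by
  obtain ⟨p0, hp0, hp0e⟩ := P.exists_mem_eq_inf' hP fun p => p iP - p j
  obtain ⟨q0, hq0, hq0e⟩ := Q.exists_mem_eq_inf' hQ fun q => q j - q iP
  obtain ⟨q1, hq1, hq1e⟩ := Q.exists_mem_eq_inf' hQ fun q => q iQ - q j
  obtain ⟨p1, hp1, hp1e⟩ := P.exists_mem_eq_inf' hP fun p => p j - p iQ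
  apply le_min
  · have hA := (hPc p0 hp0).1
    have hC := (hQc q0 hq0).2.2 iP h1 h2
    rw [hp0e, hq0e]
    linarith
  · have hA := (hQc q1 hq1).1
    have hC := (hPc p1 hp1).2.2 iQ h1.symm h3
    rw [hq1e, hp1e]
    linarith

/-- Theorem 4.4: case of a common second index `j = jP = jQ` with
`iP, iQ, j` pairwise distinct. Feasibility of the hard margin tropical SVM linear
program is equivalent to the two stated inequalities, and when feasible the optimal
margin equals the stated minimum. -/
theorem hard_margin_case4_feasible_and_optimal {d : ℕ}
    (P Q : Finset (Fin d → ℝ)) (hP : P.Nonempty) (hQ : Q.Nonempty)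
    (iP iQ j : Fin d) (h1 : iP ≠ iQ) (h2 : iP ≠ j) (h3 : iQ ≠ j) :
    ((∃ (z : ℝ) (ω : Fin d → ℝ),
      (∀ p ∈ P, z + p j + ω j - p iP - ω iP ≤ 0 ∧
        ω j - ω iP ≤ p iP - p j ∧
        ∀ l : Fin d, l ≠ iP → l ≠ j → ω l - ω j ≤ p j - p l) ∧
      (∀ q ∈ Q, z + q j + ω j - q iQ - ω iQ ≤ 0 ∧
        ω j - ω iQ ≤ q iQ - q j ∧
        ∀ l : Fin d, l ≠ iQ → l ≠ j → ω l - ω j ≤ q j - q l))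
    ↔ ((Q.sup' hQ fun q => q iP - q j) ≤ (P.inf' hP fun p => p iP - p j) ∧
       (P.sup' hP fun p => p iQ - p j) ≤ (Q.inf' hQ fun q => q iQ - q j))) ∧
    (((Q.sup' hQ fun q => q iP - q j) ≤ (P.inf' hP fun p => p iP - p j) ∧
      (P.sup' hP fun p => p iQ - p j) ≤ (Q.inf' hQ fun q => q iQ - q j)) →
      IsGreatest
        {z : ℝ | ∃ ω : Fin d → ℝ,
          (∀ p ∈ P, z + p j + ω j - p iP - ω iP ≤ 0 ∧
            ω j - ω iP ≤ p iP - p j ∧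
            ∀ l : Fin d, l ≠ iP → l ≠ j → ω l - ω j ≤ p j - p l) ∧
          (∀ q ∈ Q, z + q j + ω j - q iQ - ω iQ ≤ 0 ∧
            ω j - ω iQ ≤ q iQ - q j ∧
            ∀ l : Fin d, l ≠ iQ → l ≠ j → ω l - ω j ≤ q j - q l)}
        (min ((P.inf' hP fun p => p iP - p j) + (Q.inf' hQ fun q => q j - q iP))
             ((Q.inf' hQ fun q => q iQ - q j) + (P.inf' hP fun p => p j - p iQ)))) := by
  constructor
  · constructor
    · rintro ⟨z, ω, hPc, hQc⟩
      constructor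
      · apply Finset.sup'_le
        intro q hq
        apply Finset.le_inf'
        intro p hp
        have hB := (hPc p hp).2.1
        have hC := (hQc q hq).2.2 iP h1 h2
        linarith
      · apply Finset.sup'_le
        intro p hp
        apply Finset.le_inf'
        intro q hq
        have hB := (hQc q hq).2.1
        have hC := (hPc p hp).2.2 iQ h1.symm h3
        linarith
    · rintro ⟨hc1, hc2⟩
      exact ⟨_, aux_mem P Q hP hQ iP iQ j h1 h2 h3 hc1 hc2 _ le_rfl⟩
  · rintro ⟨hc1, hc2⟩
    constructor
    · exact aux_mem P Q hP hQ iP iQ j h1 h2 h3 hc1 hc2 _ le_rfl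
    · rintro z ⟨ω, hPc, hQc⟩
      exact aux_ub P Q hP hQ iP iQ j h1 h2 h3 z ω hPc hQc
end

section
/- If both P and Q are nonempty and the trade-off constant C ≥ 1, then the soft margin tropical SVM objective z − C · Σ_{ξ∈P∪Q}(α_ξ + β_ξ + Σ_{l≠i(ξ),j(ξ)} γ_{ξ,l}) is bounded above over all feasible solutions (z; α; β; γ; ω). -/
/-- Feasibility of the soft margin tropical SVM linear program. -/
def SoftFeasible {d : ℕ} (P Q : Finset (Fin d → ℝ)) (i j : (Fin d → ℝ) → Fin d)
    (z : ℝ) (α β : (Fin d → ℝ) → ℝ) (γ : (Fin d → ℝ) → Fin d → ℝ)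
    (ω : Fin d → ℝ) : Prop :=
  (∀ ξ ∈ P ∪ Q, z + ξ (j ξ) + ω (j ξ) - ξ (i ξ) - ω (i ξ) ≤ α ξ) ∧
  (∀ ξ ∈ P ∪ Q, ω (j ξ) - ω (i ξ) ≤ ξ (i ξ) - ξ (j ξ) + β ξ) ∧
  (∀ ξ ∈ P ∪ Q, ∀ l : Fin d, l ≠ i ξ → l ≠ j ξ →
      ω l - ω (j ξ) ≤ ξ (j ξ) - ξ l + γ ξ l) ∧
  (0 ≤ z) ∧
  (∀ ξ ∈ P ∪ Q, 0 ≤ α ξ ∧ 0 ≤ β ξ ∧ ∀ l : Fin d, 0 ≤ γ ξ l)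

/-- Theorem 4.7: if `P` and `Q` are both nonempty and the trade-off
constant `C ≥ 1`, then the soft margin objective
`z − C·Σ_ξ (α_ξ + β_ξ + Σ_{l ≠ i ξ, j ξ} γ_{ξ,l})` is bounded above over all
feasible solutions. -/
theorem soft_margin_bounded_above {d : ℕ}
    (P Q : Finset (Fin d → ℝ)) (hP : P.Nonempty) (hQ : Q.Nonempty)
    (hdisj : Disjoint P Q) (i j : (Fin d → ℝ) → Fin d)
    (hij : ∀ ξ ∈ P ∪ Q, i ξ ≠ j ξ)
    (hiPQ : ∀ p ∈ P, ∀ q ∈ Q, i p ≠ i q)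
    (C : ℝ) (hC : 1 ≤ C) :
    BddAbove {r : ℝ | ∃ (z : ℝ) (α β : (Fin d → ℝ) → ℝ)
        (γ : (Fin d → ℝ) → Fin d → ℝ) (ω : Fin d → ℝ),
      SoftFeasible P Q i j z α β γ ω ∧
      r = z - C * ∑ ξ ∈ P ∪ Q,
            (α ξ + β ξ + ∑ l ∈ Finset.univ \ {i ξ, j ξ}, γ ξ l)} := by
  obtain ⟨p, hp⟩ := hP
  obtain ⟨q, hq⟩ := hQ
  have hpPQ : p ∈ P ∪ Q := Finset.mem_union_left _ hp
  have hqPQ : q ∈ P ∪ Q := Finset.mem_union_right _ hq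
  have hpq : p ≠ q := fun h => (Finset.disjoint_left.mp hdisj hp) (h ▸ hq)
  have hab : i p ≠ j p := hij p hpPQ
  have hce : i q ≠ j q := hij q hqPQ
  have hac : i p ≠ i q := hiPQ p hp q hq
  refine ⟨|p (i p) - p (j p)| + |q (j q) - q (i p)| + |q (i q) - q (j q)| +
    |p (j p) - p (i q)|, ?_⟩
  rintro r ⟨z, α, β, γ, ω, ⟨h1, h2, h3, hz, hnn⟩, rfl⟩
  set G1 : ℝ := if i p = j q then 0 else γ q (i p) with hG1
  set G2 : ℝ := if i q = j p then 0 else γ p (i q) with hG2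
  have e1 : z + p (j p) + ω (j p) - p (i p) - ω (i p) ≤ α p := h1 p hpPQ
  have e2 : ω (j q) - ω (i q) ≤ q (i q) - q (j q) + β q := h2 q hqPQ
  have e3 : ω (i p) - ω (j q) ≤ |q (j q) - q (i p)| + G1 := by
    by_cases hae : i p = j q
    · rw [hG1, if_pos hae, hae]
      simp [abs_nonneg]
    · have h := h3 q hqPQ (i p) hac hae
      have h2' := le_abs_self (q (j q) - q (i p))
      rw [hG1, if_neg hae]
      linarith
  have e4 : ω (i q) - ω (j p) ≤ |p (j p) - p (i q)| + G2 := by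
    by_cases hcb : i q = j p
    · rw [hG2, if_pos hcb, hcb]
      simp [abs_nonneg]
    · have h := h3 p hpPQ (i q) (Ne.symm hac) hcb
      have h2' := le_abs_self (p (j p) - p (i q))
      rw [hG2, if_neg hcb]
      linarith
  have habs1 := le_abs_self (p (i p) - p (j p))
  have habs3 := le_abs_self (q (i q) - q (j q))
  -- z is bounded by the penalties plus a constant
  have key : z ≤ α p + β q + G1 + G2 + (|p (i p) - p (j p)| + |q (j q) - q (i p)| +
      |q (i q) - q (j q)| + |p (j p) - p (i q)|) := by linarith
  -- each summand of the penalty sum is nonnegative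
  have hg : ∀ ξ ∈ P ∪ Q, 0 ≤ α ξ + β ξ + ∑ l ∈ Finset.univ \ {i ξ, j ξ}, γ ξ l := by
    intro ξ hξ
    obtain ⟨hα, hβ, hγ⟩ := hnn ξ hξ
    have : 0 ≤ ∑ l ∈ Finset.univ \ {i ξ, j ξ}, γ ξ l :=
      Finset.sum_nonneg fun l _ => hγ l
    linarith
  have hgp : α p + G2 ≤ α p + β p + ∑ l ∈ Finset.univ \ {i p, j p}, γ p l := by
    obtain ⟨hα, hβ, hγ⟩ := hnn p hpPQ
    by_cases hcb : i q = j p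
    · rw [hG2, if_pos hcb]
      have : 0 ≤ ∑ l ∈ Finset.univ \ {i p, j p}, γ p l :=
        Finset.sum_nonneg fun l _ => hγ l
      linarith
    · rw [hG2, if_neg hcb]
      have hmem : i q ∈ Finset.univ \ ({i p, j p} : Finset (Fin d)) := by
        simp [Ne.symm hac, hcb]
      have := Finset.single_le_sum (f := γ p) (fun l _ => hγ l) hmem
      linarith
  have hgq : β q + G1 ≤ α q + β q + ∑ l ∈ Finset.univ \ {i q, j q}, γ q l := by
    obtain ⟨hα, hβ, hγ⟩ := hnn q hqPQ
    by_cases hae : i p = j q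
    · rw [hG1, if_pos hae]
      have : 0 ≤ ∑ l ∈ Finset.univ \ {i q, j q}, γ q l :=
        Finset.sum_nonneg fun l _ => hγ l
      linarith
    · rw [hG1, if_neg hae]
      have hmem : i p ∈ Finset.univ \ ({i q, j q} : Finset (Fin d)) := by
        simp [hac, hae]
      have := Finset.single_le_sum (f := γ q) (fun l _ => hγ l) hmem
      linarith
  set S := ∑ ξ ∈ P ∪ Q, (α ξ + β ξ + ∑ l ∈ Finset.univ \ {i ξ, j ξ}, γ ξ l) with hS
  have hsub : ({p, q} : Finset (Fin d → ℝ)) ⊆ P ∪ Q := by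
    intro x hx
    rcases Finset.mem_insert.mp hx with h | h
    · exact h ▸ hpPQ
    · exact (Finset.mem_singleton.mp h) ▸ hqPQ
  have hpqS : (α p + β p + ∑ l ∈ Finset.univ \ {i p, j p}, γ p l) +
      (α q + β q + ∑ l ∈ Finset.univ \ {i q, j q}, γ q l) ≤ S := by
    have h := Finset.sum_le_sum_of_subset_of_nonneg hsub (fun ξ hξ _ => hg ξ hξ)
    rwa [Finset.sum_pair hpq] at h
  have hS0 : 0 ≤ S := Finset.sum_nonneg hg
  have hCS : S ≤ C * S := le_mul_of_one_le_left hS0 hC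
  linarith
end

section
/- In the soft margin tropical SVM with constant index assignments i_P, j_P on P and i_Q, j_Q on Q, every optimal solution (z*; α*; β*; γ*; ω*) satisfies γ*_{ξ,l} = 0 for all ξ ∈ P ∪ Q and all indices l not in {i_P, j_P, i_Q, j_Q}. -/
/-- Feasibility of the soft margin tropical SVM linear program with constant index
assignments `iP, jP` on `P` and `iQ, jQ` on `Q`. -/
def SoftFeasibleConst {d : ℕ} (P Q : Finset (Fin d → ℝ)) (iP jP iQ jQ : Fin d)
    (z : ℝ) (α β : (Fin d → ℝ) → ℝ) (γ : (Fin d → ℝ) → Fin d → ℝ)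
    (ω : Fin d → ℝ) : Prop :=
  (∀ p ∈ P, z + p jP + ω jP - p iP - ω iP ≤ α p ∧
      ω jP - ω iP ≤ p iP - p jP + β p ∧
      ∀ l : Fin d, l ≠ iP → l ≠ jP → ω l - ω jP ≤ p jP - p l + γ p l) ∧
  (∀ q ∈ Q, z + q jQ + ω jQ - q iQ - ω iQ ≤ α q ∧
      ω jQ - ω iQ ≤ q iQ - q jQ + β q ∧
      ∀ l : Fin d, l ≠ iQ → l ≠ jQ → ω l - ω jQ ≤ q jQ - q l + γ q l) ∧
  (0 ≤ z) ∧
  (∀ ξ ∈ P ∪ Q, 0 ≤ α ξ ∧ 0 ≤ β ξ ∧ ∀ l : Fin d, 0 ≤ γ ξ l)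

/-- The soft margin objective with trade-off constant `C`. -/
def SoftObjective {d : ℕ} (P Q : Finset (Fin d → ℝ)) (iP jP iQ jQ : Fin d)
    (C : ℝ) (z : ℝ) (α β : (Fin d → ℝ) → ℝ) (γ : (Fin d → ℝ) → Fin d → ℝ) : ℝ :=
  z - C * ((∑ p ∈ P, (α p + β p + ∑ l ∈ Finset.univ \ {iP, jP}, γ p l)) +
           (∑ q ∈ Q, (α q + β q + ∑ l ∈ Finset.univ \ {iQ, jQ}, γ q l)))

/-- Proposition 4.10: every optimal solution of the soft margin
tropical SVM with constant index assignments has `γ*_{ξ,l} = 0` for all `ξ ∈ P ∪ Q`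
and all `l ∉ {iP, jP, iQ, jQ}`. -/
theorem soft_margin_optimal_gamma_zero {d : ℕ}
    (P Q : Finset (Fin d → ℝ)) (hP : P.Nonempty) (hQ : Q.Nonempty)
    (hdisj : Disjoint P Q) (iP jP iQ jQ : Fin d)
    (h1 : iP ≠ jP) (h2 : iQ ≠ jQ) (h3 : iP ≠ iQ)
    (C : ℝ) (hC : 0 < C)
    (z' : ℝ) (α' β' : (Fin d → ℝ) → ℝ) (γ' : (Fin d → ℝ) → Fin d → ℝ)
    (ω' : Fin d → ℝ)
    (hfeas : SoftFeasibleConst P Q iP jP iQ jQ z' α' β' γ' ω')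
    (hopt : ∀ (z : ℝ) (α β : (Fin d → ℝ) → ℝ) (γ : (Fin d → ℝ) → Fin d → ℝ)
        (ω : Fin d → ℝ), SoftFeasibleConst P Q iP jP iQ jQ z α β γ ω →
        SoftObjective P Q iP jP iQ jQ C z α β γ ≤
          SoftObjective P Q iP jP iQ jQ C z' α' β' γ') :
    ∀ ξ ∈ P ∪ Q, ∀ l : Fin d,
      l ≠ iP → l ≠ jP → l ≠ iQ → l ≠ jQ → γ' ξ l = 0 := by
  intro ξ hξ l₀ hl1 hl2 hl3 hl4
  obtain ⟨hfP, hfQ, hz, hnn⟩ := hfeas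
  set M : ℝ := min (P.inf' hP fun p => ω' jP + p jP - p l₀)
      (Q.inf' hQ fun q => ω' jQ + q jQ - q l₀) with hM
  set ω'' : Fin d → ℝ := Function.update ω' l₀ M with hω
  set γ'' : (Fin d → ℝ) → Fin d → ℝ := fun ξ l => if l = l₀ then 0 else γ' ξ l with hγ
  have hωP : ω'' jP = ω' jP := Function.update_of_ne (Ne.symm hl2) _ _
  have hωiP : ω'' iP = ω' iP := Function.update_of_ne (Ne.symm hl1) _ _
  have hωQ : ω'' jQ = ω' jQ := Function.update_of_ne (Ne.symm hl4) _ _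
  have hωiQ : ω'' iQ = ω' iQ := Function.update_of_ne (Ne.symm hl3) _ _
  have hfeas'' : SoftFeasibleConst P Q iP jP iQ jQ z' α' β' γ'' ω'' := by
    refine ⟨?_, ?_, hz, ?_⟩
    · intro p hp
      obtain ⟨c1, c2, c3⟩ := hfP p hp
      refine ⟨by rw [hωP, hωiP]; exact c1, by rw [hωP, hωiP]; exact c2, ?_⟩
      intro l hli hlj
      by_cases hl : l = l₀
      · subst hl
        have : ω'' l = M := Function.update_self _ _ _
        rw [this, hωP]
        have hle : M ≤ ω' jP + p jP - p l := by
          refine le_trans (min_le_left _ _) ?_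
          exact Finset.inf'_le _ hp
        simp only [hγ, if_pos rfl]
        linarith
      · have : ω'' l = ω' l := Function.update_of_ne hl _ _
        rw [this, hωP]
        simp only [hγ, if_neg hl]
        exact c3 l hli hlj
    · intro q hq
      obtain ⟨c1, c2, c3⟩ := hfQ q hq
      refine ⟨by rw [hωQ, hωiQ]; exact c1, by rw [hωQ, hωiQ]; exact c2, ?_⟩
      intro l hli hlj
      by_cases hl : l = l₀
      · subst hl
        have : ω'' l = M := Function.update_self _ _ _
        rw [this, hωQ]
        have hle : M ≤ ω' jQ + q jQ - q l := by
          refine le_trans (min_le_right _ _) ?_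
          exact Finset.inf'_le _ hq
        simp only [hγ, if_pos rfl]
        linarith
      · have : ω'' l = ω' l := Function.update_of_ne hl _ _
        rw [this, hωQ]
        simp only [hγ, if_neg hl]
        exact c3 l hli hlj
    · intro η hη
      obtain ⟨ha, hb, hg⟩ := hnn η hη
      refine ⟨ha, hb, fun l => ?_⟩
      by_cases hl : l = l₀
      · simp [hγ, hl]
      · simp only [hγ, if_neg hl]; exact hg l
  have hle := hopt z' α' β' γ'' ω'' hfeas''
  -- compute sums
  have hmemP : l₀ ∈ Finset.univ \ ({iP, jP} : Finset (Fin d)) := by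
    simp [hl1, hl2]
  have hmemQ : l₀ ∈ Finset.univ \ ({iQ, jQ} : Finset (Fin d)) := by
    simp [hl3, hl4]
  have hsum : ∀ (s : Finset (Fin d)), l₀ ∈ s → ∀ η : Fin d → ℝ,
      ∑ l ∈ s, γ'' η l = (∑ l ∈ s, γ' η l) - γ' η l₀ := by
    intro s hs η
    rw [← Finset.sum_erase_add s (γ'' η) hs, ← Finset.sum_erase_add s (γ' η) hs]
    have : ∑ l ∈ s.erase l₀, γ'' η l = ∑ l ∈ s.erase l₀, γ' η l := by
      refine Finset.sum_congr rfl fun l hl => ?_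
      simp [hγ, Finset.ne_of_mem_erase hl]
    rw [this]
    simp [hγ]
  have hobj : SoftObjective P Q iP jP iQ jQ C z' α' β' γ'' =
      SoftObjective P Q iP jP iQ jQ C z' α' β' γ' +
        C * ((∑ p ∈ P, γ' p l₀) + (∑ q ∈ Q, γ' q l₀)) := by
    unfold SoftObjective
    have e1 : ∑ p ∈ P, (α' p + β' p + ∑ l ∈ Finset.univ \ {iP, jP}, γ'' p l) =
        (∑ p ∈ P, (α' p + β' p + ∑ l ∈ Finset.univ \ {iP, jP}, γ' p l)) -
          ∑ p ∈ P, γ' p l₀ := by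
      rw [← Finset.sum_sub_distrib]
      refine Finset.sum_congr rfl fun p hp => ?_
      rw [hsum _ hmemP p]; ring
    have e2 : ∑ q ∈ Q, (α' q + β' q + ∑ l ∈ Finset.univ \ {iQ, jQ}, γ'' q l) =
        (∑ q ∈ Q, (α' q + β' q + ∑ l ∈ Finset.univ \ {iQ, jQ}, γ' q l)) -
          ∑ q ∈ Q, γ' q l₀ := by
      rw [← Finset.sum_sub_distrib]
      refine Finset.sum_congr rfl fun q hq => ?_
      rw [hsum _ hmemQ q]; ring
    rw [e1, e2]; ring
  rw [hobj] at hle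
  have hS : (∑ p ∈ P, γ' p l₀) + (∑ q ∈ Q, γ' q l₀) ≤ 0 := by
    nlinarith
  have hPnn : 0 ≤ ∑ p ∈ P, γ' p l₀ :=
    Finset.sum_nonneg fun p hp => (hnn p (Finset.mem_union_left _ hp)).2.2 l₀
  have hQnn : 0 ≤ ∑ q ∈ Q, γ' q l₀ :=
    Finset.sum_nonneg fun q hq => (hnn q (Finset.mem_union_right _ hq)).2.2 l₀
  have hPz : ∑ p ∈ P, γ' p l₀ = 0 := le_antisymm (by linarith) hPnn
  have hQz : ∑ q ∈ Q, γ' q l₀ = 0 := le_antisymm (by linarith) hQnn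
  rcases Finset.mem_union.mp hξ with h | h
  · exact (Finset.sum_eq_zero_iff_of_nonneg
      (fun p hp => (hnn p (Finset.mem_union_left _ hp)).2.2 l₀)).mp hPz ξ h
  · exact (Finset.sum_eq_zero_iff_of_nonneg
      (fun q hq => (hnn q (Finset.mem_union_right _ hq)).2.2 l₀)).mp hQz ξ h
end

section
/- For d = 3 and indices k_1 = 1, k_2 = 2, if P and Q satisfy max_{p∈P}(p_2 − p_1) ≤ min_{q∈Q}(q_2 − q_1), then choosing ω with ω_1 − ω_2 = (1/2)(min_{q∈Q}(q_2 − q_1) + max_{p∈P}(p_2 − p_1)) and ω_3 sufficiently small yields a feasible solution to the hard margin LP attaining z = (1/2)(min_{p∈P}(p_1 − p_2) + min_{q∈Q}(q_2 − q_1)). -/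
/-- for `d = 3` with indices `k₁ = 1, k₂ = 2` (Lean: `0, 1`), if
`max_{p∈P}(p₂ − p₁) ≤ min_{q∈Q}(q₂ − q₁)`, then there is a feasible `ω` with
`ω₁ − ω₂ = ½(min_{q∈Q}(q₂ − q₁) + max_{p∈P}(p₂ − p₁))` attaining the margin
`z = ½(min_{p∈P}(p₁ − p₂) + min_{q∈Q}(q₂ − q₁))`. -/
theorem hard_margin_dim3_explicit_solution
    (P Q : Finset (Fin 3 → ℝ)) (hP : P.Nonempty) (hQ : Q.Nonempty)
    (hsep : (P.sup' hP fun p => p 1 - p 0) ≤ Q.inf' hQ fun q => q 1 - q 0) :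
    ∃ ω : Fin 3 → ℝ,
      ω 0 - ω 1 = ((Q.inf' hQ fun q => q 1 - q 0) +
                   (P.sup' hP fun p => p 1 - p 0)) / 2 ∧
      (let z : ℝ := ((P.inf' hP fun p => p 0 - p 1) +
                     (Q.inf' hQ fun q => q 1 - q 0)) / 2
       (∀ p ∈ P, z + p 1 + ω 1 - p 0 - ω 0 ≤ 0 ∧
         ω 1 - ω 0 ≤ p 0 - p 1 ∧
         ω 2 - ω 1 ≤ p 1 - p 2) ∧
       (∀ q ∈ Q, z + q 0 + ω 0 - q 1 - ω 1 ≤ 0 ∧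
         ω 0 - ω 1 ≤ q 1 - q 0 ∧
         ω 2 - ω 0 ≤ q 0 - q 2)) := by
  set S := P.sup' hP fun p => p 1 - p 0 with hS
  set IQ := Q.inf' hQ fun q => q 1 - q 0 with hIQ
  set I := P.inf' hP fun p => p 0 - p 1 with hI
  set A := P.inf' hP fun p => p 1 - p 2 with hA
  set B := Q.inf' hQ fun q => q 0 - q 2 with hB
  set M := (IQ + S) / 2 with hM
  have hIS : I = -S := by
    obtain ⟨p₀, hp₀, hp₀e⟩ := Finset.exists_mem_eq_sup' hP (fun p => p 1 - p 0)
    obtain ⟨p₁, hp₁, hp₁e⟩ := Finset.exists_mem_eq_inf' hP (fun p => p 0 - p 1)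
    have h1 : I ≤ p₀ 0 - p₀ 1 := Finset.inf'_le _ hp₀
    have h2 : p₁ 1 - p₁ 0 ≤ S := by rw [hS]; exact Finset.le_sup' (fun p => p 1 - p 0) hp₁
    rw [← hI] at hp₁e; rw [← hS] at hp₀e
    linarith [hp₀e, hp₁e]
  refine ⟨![M, 0, min A (M + B)], by simp [Matrix.cons_val_zero, Matrix.cons_val_one], ?_, ?_⟩
  · intro p hp
    have h1 : I ≤ p 0 - p 1 := Finset.inf'_le _ hp
    have h2 : A ≤ p 1 - p 2 := Finset.inf'_le _ hp
    have h3 : min A (M + B) ≤ A := min_le_left _ _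
    refine ⟨?_, ?_, ?_⟩ <;> simp only [Matrix.cons_val_zero, Matrix.cons_val_one,
      Matrix.head_cons, Matrix.cons_val_two, Matrix.tail_cons] <;> linarith [hsep]
  · intro q hq
    have h1 : IQ ≤ q 1 - q 0 := Finset.inf'_le _ hq
    have h2 : B ≤ q 0 - q 2 := Finset.inf'_le _ hq
    have h3 : min A (M + B) ≤ M + B := min_le_right _ _
    refine ⟨?_, ?_, ?_⟩ <;> simp only [Matrix.cons_val_zero, Matrix.cons_val_one,
      Matrix.head_cons, Matrix.cons_val_two, Matrix.tail_cons] <;> linarith [hsep]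
end
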